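/- arXiv:1906.06098 — 7 statements merged into one kernel-verified Lean document; each statement's English description precedes it below -/
import Mathlib

section
/- Let x ∈ ℤ^N (cyclic indexing) and let x' be obtained from x by replacing coordinate x_i with a = ⌊(x_{i-1}+x_{i+1})/2⌋. Then f(x') ≤ f(x), where f(y) = ∑_{j=1}^N (y_j - y_{j+1})^2 cyclically. -/
/-!
Only the two terms of `f` involving the `i`-th coordinate change, and their sum
`(p - t)² + (t - q)²` is a quadratic in `t` symmetric about `(p + q) / 2`; among integers it is
therefore minimal at `⌊(p + q) / 2⌋`.
-/

open Finset Function

/-- `σ` plays the role of the cyclic successor `j ↦ j + 1`. -/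
def cyclicEnergy {ι R : Type*} [Fintype ι] [CommRing R] (σ : Equiv.Perm ι) (y : ι → R) : R :=
  ∑ j, (y j - y (σ j)) ^ 2

theorem sq_sub_add_sq_sub_le_of_two_mul_le {p q a : ℤ} (h₁ : 2 * a ≤ p + q)
    (h₂ : p + q ≤ 2 * a + 1) (t : ℤ) :
    (p - a) ^ 2 + (a - q) ^ 2 ≤ (p - t) ^ 2 + (t - q) ^ 2 := by
  have key : (p - t) ^ 2 + (t - q) ^ 2 - ((p - a) ^ 2 + (a - q) ^ 2) =
      2 * ((t - a) * (t - a - (p + q - 2 * a))) := by ring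
  obtain hr | hr : p + q - 2 * a = 0 ∨ p + q - 2 * a = 1 := by omega
  · rw [hr, sub_zero] at key
    nlinarith [mul_self_nonneg (t - a)]
  · rw [hr] at key
    nlinarith [Int.le_self_sq (t - a)]

theorem two_mul_fdiv_two_le (s : ℤ) : 2 * s.fdiv 2 ≤ s ∧ s ≤ 2 * s.fdiv 2 + 1 := by
  rw [Int.fdiv_eq_ediv_of_nonneg _ (by norm_num)]
  omega

section

variable {ι R : Type*} [Fintype ι] [DecidableEq ι] [CommRing R]

theorem cyclicEnergy_update_add (σ : Equiv.Perm ι) (y : ι → R) {i : ι} (hi : σ i ≠ i) (a : R) :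
    cyclicEnergy σ (update y i a) + ((y (σ.symm i) - y i) ^ 2 + (y i - y (σ i)) ^ 2) =
      cyclicEnergy σ y + ((y (σ.symm i) - a) ^ 2 + (a - y (σ i)) ^ 2) := by
  have hne : σ.symm i ≠ i := fun h => hi (by simpa using congrArg σ h.symm)
  have split : ∀ z : ι → R, cyclicEnergy σ z =
      ∑ j ∈ univ \ {σ.symm i, i}, (z j - z (σ j)) ^ 2 +
        ((z (σ.symm i) - z i) ^ 2 + (z i - z (σ i)) ^ 2) := fun z => by
    rw [cyclicEnergy, ← sum_sdiff (subset_univ {σ.symm i, i}), sum_pair hne,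
      Equiv.apply_symm_apply]
  have far : ∑ j ∈ univ \ {σ.symm i, i}, (update y i a j - update y i a (σ j)) ^ 2 =
      ∑ j ∈ univ \ {σ.symm i, i}, (y j - y (σ j)) ^ 2 := by
    refine sum_congr rfl fun j hj => ?_
    simp only [mem_sdiff, mem_univ, mem_insert, mem_singleton, true_and, not_or] at hj
    rw [update_of_ne hj.2, update_of_ne fun h => hj.1 (σ.eq_symm_apply.mpr h)]
  rw [split, split, far, update_self, update_of_ne hne, update_of_ne hi]
  ring

theorem cyclicEnergy_update_fdiv_le (σ : Equiv.Perm ι) (y : ι → ℤ) (i : ι) :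
    cyclicEnergy σ (update y i ((y (σ.symm i) + y (σ i)).fdiv 2)) ≤ cyclicEnergy σ y := by
  obtain ⟨h₁, h₂⟩ := two_mul_fdiv_two_le (y (σ.symm i) + y (σ i))
  by_cases hi : σ i = i
  · -- a fixed point of `σ` is its own neighbour, and the update does nothing
    have hsymm : σ.symm i = i := σ.symm_apply_eq.mpr hi.symm
    rw [hsymm, hi] at h₁ h₂
    rw [hsymm, hi, show (y i + y i).fdiv 2 = y i by omega, update_eq_self]
  · have := cyclicEnergy_update_add σ y hi ((y (σ.symm i) + y (σ i)).fdiv 2)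
    have := sq_sub_add_sq_sub_le_of_two_mul_le h₁ h₂ (y i)
    linarith

end

theorem stmt_1_general (N : ℕ) [NeZero N] (x : Fin N → ℤ) (i : Fin N)
    (a : ℤ) (ha : a = Int.fdiv (x (i - 1) + x (i + 1)) 2)
    (x' : Fin N → ℤ) (hx' : x' = Function.update x i a) :
    ∑ j : Fin N, (x' j - x' (j + 1)) ^ 2 ≤ ∑ j : Fin N, (x j - x (j + 1)) ^ 2 := by
  subst ha hx'
  simpa [cyclicEnergy, sub_eq_add_neg] using cyclicEnergy_update_fdiv_le (Equiv.addRight 1) x i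

theorem stmt_1 (N : ℕ) [NeZero N] (hN : 3 ≤ N) (x : Fin N → ℤ) (i : Fin N)
    (a : ℤ) (ha : a = Int.fdiv (x (i - 1) + x (i + 1)) 2)
    (x' : Fin N → ℤ) (hx' : x' = Function.update x i a) :
    ∑ j : Fin N, (x' j - x' (j + 1)) ^ 2 ≤ ∑ j : Fin N, (x j - x (j + 1)) ^ 2 :=
  stmt_1_general N x i a ha x' hx'
end

section
/- Let x ∈ ℤ^N (cyclic indexing), suppose |x_i - (x_{i-1}+x_{i+1})/2| ≥ 1, and let x' be obtained from x by replacing x_i with a = ⌊(x_{i-1}+x_{i+1})/2⌋. Then f(x') ≤ f(x) - 1, where f(y) = ∑_{j=1}^N (y_j - y_{j+1})^2 cyclically. -/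
/-!
Only the two terms `(p - m)² + (m - q)²` of `f` involving `x_i = m` change, where
`p = x_{i-1}`, `q = x_{i+1}`. Since `2((p - t)² + (t - q)²) = (2t - p - q)² + (p - q)²`,
twice the decrease is `(2m - p - q)² - (2a - p - q)² ≥ 4 - 1`, because `|2m - p - q| ≥ 2`
by hypothesis and `|2a - p - q| ≤ 1` for the rounded midpoint `a`.
-/

open Finset Function

theorem sum_update_adjacent_eq {G R M : Type*} [AddGroup G] [Fintype G] [DecidableEq G]
    [AddCommGroup M] (F : R → R → M) (x : G → R) (i s : G) (hs : s ≠ 0) (a : R) :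
    ∑ j, F (update x i a j) (update x i a (j + s)) =
      ∑ j, F (x j) (x (j + s)) - (F (x (i - s)) (x i) + F (x i) (x (i + s)))
        + (F (x (i - s)) a + F a (x (i + s))) := by
  have hl : i - s ≠ i := fun h => hs (sub_eq_self.mp h)
  have hr : i + s ≠ i := fun h => hs (add_eq_left.mp h)
  have hpair : ({i - s, i} : Finset G) ⊆ univ := subset_univ _
  have hrest : ∀ j ∈ univ \ {i - s, i},
      F (update x i a j) (update x i a (j + s)) = F (x j) (x (j + s)) := by
    intro j hj
    simp only [mem_sdiff, mem_insert, mem_singleton, not_or] at hj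
    have hjs : j + s ≠ i := fun h => hj.2.1 (eq_sub_of_add_eq h)
    rw [update_of_ne hj.2.2, update_of_ne hjs]
  rw [← sum_sdiff hpair, ← sum_sdiff hpair (f := fun j => F (x j) (x (j + s))),
    sum_congr rfl hrest, sum_pair hl, sum_pair hl]
  simp only [sub_add_cancel, update_self, update_of_ne hl, update_of_ne hr]
  abel

theorem two_le_abs_of_one_le_abs_sub_midpoint {m p q : ℤ}
    (h : 1 ≤ |(m : ℝ) - ((p : ℝ) + (q : ℝ)) / 2|) : 2 ≤ |2 * m - (p + q)| := by
  have hcast : ((|2 * m - (p + q)| : ℤ) : ℝ) = 2 * |(m : ℝ) - ((p : ℝ) + (q : ℝ)) / 2| := by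
    push_cast
    rw [← abs_two, ← abs_mul, abs_two]
    ring_nf
  have : (2 : ℝ) ≤ ((|2 * m - (p + q)| : ℤ) : ℝ) := by rw [hcast]; linarith
  exact_mod_cast this

theorem sq_sub_fdiv_add_sq_fdiv_sub_lt {m p q : ℤ} (h : 2 ≤ |2 * m - (p + q)|) :
    (p - (p + q).fdiv 2) ^ 2 + ((p + q).fdiv 2 - q) ^ 2 < (p - m) ^ 2 + (m - q) ^ 2 := by
  set a := (p + q).fdiv 2 with ha
  have hquad (t : ℤ) : 2 * ((p - t) ^ 2 + (t - q) ^ 2) = (2 * t - (p + q)) ^ 2 + (p - q) ^ 2 := by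
    ring
  have ha1 : (2 * a - (p + q)) ^ 2 ≤ 1 := by
    rw [ha, Int.fdiv_eq_ediv_of_nonneg _ (by norm_num)]
    have : 2 * ((p + q) / 2) - (p + q) = 0 ∨ 2 * ((p + q) / 2) - (p + q) = -1 := by omega
    rcases this with h0 | h0 <;> rw [h0] <;> norm_num
  have hm4 : 4 ≤ (2 * m - (p + q)) ^ 2 := by
    rw [← sq_abs]
    nlinarith
  have := hquad a
  have := hquad m
  linarith

theorem stmt_2 (N : ℕ) [NeZero N] (hN : 3 ≤ N) (x : Fin N → ℤ) (i : Fin N)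
    (hd : |(x i : ℝ) - ((x (i - 1) : ℝ) + (x (i + 1) : ℝ)) / 2| ≥ 1)
    (a : ℤ) (ha : a = Int.fdiv (x (i - 1) + x (i + 1)) 2)
    (x' : Fin N → ℤ) (hx' : x' = Function.update x i a) :
    ∑ j : Fin N, (x' j - x' (j + 1)) ^ 2 ≤ (∑ j : Fin N, (x j - x (j + 1)) ^ 2) - 1 := by
  have h10 : (1 : Fin N) ≠ 0 := by
    rw [Ne, Fin.one_eq_zero_iff]
    omega
  have hlt := sq_sub_fdiv_add_sq_fdiv_sub_lt (two_le_abs_of_one_le_abs_sub_midpoint hd)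
  subst hx' ha
  rw [sum_update_adjacent_eq (fun u v => (u - v) ^ 2) x i 1 h10]
  linarith
end

section
/- Let x ∈ ℝ^N with cyclic indexing, Δ_i = x_i - x_{i-1}, and d(x) = max_i |x_i - (x_{i-1}+x_{i+1})/2|. Then max_i |Δ_i| ≤ N·d(x). -/
/-!
Write `Δ i = x i - x (i - 1)`. Then `Δ (i + 1) - Δ i = -2 (x i - (x (i - 1) + x (i + 1)) / 2)`, so
consecutive increments differ by at most `2 d`, and the increments sum to zero around the cycle.
Hence for every `i` some `Δ j` has the opposite sign, so `|Δ i| ≤ |Δ i - Δ j|`. Walking from `i`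
to `j` forwards takes `k` steps and backwards at most `N - k`, so `2 |Δ i - Δ j| ≤ N · 2d`.
-/

open Finset

theorem abs_apply_add_nsmul_sub_le {G : Type*} [AddMonoid G] {D : G → ℝ} {g : G} {c : ℝ}
    (hstep : ∀ a, |D (a + g) - D a| ≤ c) (a : G) (k : ℕ) :
    |D (a + k • g) - D a| ≤ k * c := by
  induction k with
  | zero => simp
  | succ k ih =>
    calc |D (a + (k + 1) • g) - D a|
        ≤ |D (a + k • g + g) - D (a + k • g)| + |D (a + k • g) - D a| := by
          rw [succ_nsmul, ← add_assoc]
          exact abs_sub_le _ _ _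
      _ ≤ c + k * c := add_le_add (hstep _) ih
      _ = (k + 1 : ℕ) * c := by push_cast; ring

theorem exists_abs_le_abs_sub_of_sum_eq_zero {ι : Type*} [Fintype ι] [Nonempty ι] {D : ι → ℝ}
    (hsum : ∑ j, D j = 0) (i : ι) : ∃ j, |D i| ≤ |D i - D j| := by
  rcases le_total 0 (D i) with hi | hi
  · obtain ⟨j, -, hj⟩ := exists_le_of_sum_le (f := D) (g := 0) univ_nonempty (by simp [hsum])
    rw [Pi.zero_apply] at hj
    exact ⟨j, by rw [abs_of_nonneg hi, abs_of_nonneg (by linarith)]; linarith⟩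
  · obtain ⟨j, -, hj⟩ := exists_le_of_sum_le (f := 0) (g := D) univ_nonempty (by simp [hsum])
    rw [Pi.zero_apply] at hj
    exact ⟨j, by rw [abs_of_nonpos hi, abs_of_nonpos (by linarith)]; linarith⟩

namespace Fin

variable {n : ℕ} [NeZero n]

open Fin.NatCast in
theorem val_nsmul_one (a : Fin n) : a.val • (1 : Fin n) = a := by
  rw [nsmul_one, cast_val_eq_self]

theorem val_sub_add_val_sub_le (i j : Fin n) : (j - i).val + (i - j).val ≤ n := by
  rw [← neg_sub j i, Fin.val_neg']
  have := Nat.mod_le (n - (j - i).val) n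
  omega

theorem two_mul_abs_le_of_sum_eq_zero {D : Fin n → ℝ} {c : ℝ} (hsum : ∑ j, D j = 0)
    (hstep : ∀ a, |D (a + 1) - D a| ≤ c) (i : Fin n) : 2 * |D i| ≤ n * c := by
  obtain ⟨j, hj⟩ := exists_abs_le_abs_sub_of_sum_eq_zero hsum i
  have forward : |D j - D i| ≤ (j - i).val * c := by
    simpa [val_nsmul_one] using abs_apply_add_nsmul_sub_le hstep i (j - i).val
  have backward : |D i - D j| ≤ (i - j).val * c := by
    simpa [val_nsmul_one] using abs_apply_add_nsmul_sub_le hstep j (i - j).val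
  have hc : 0 ≤ c := (abs_nonneg _).trans (hstep i)
  have hlen : ((j - i).val + (i - j).val : ℝ) ≤ n := by exact_mod_cast val_sub_add_val_sub_le i j
  rw [abs_sub_comm] at forward
  calc 2 * |D i| ≤ |D i - D j| + |D i - D j| := by linarith
    _ ≤ ((j - i).val + (i - j).val) * c := by linarith
    _ ≤ n * c := mul_le_mul_of_nonneg_right hlen hc

end Fin

theorem stmt_6_general (N : ℕ) [NeZero N] (x : Fin N → ℝ) :
    Finset.univ.sup' Finset.univ_nonempty (fun i : Fin N => |x i - x (i - 1)|) ≤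
      N * Finset.univ.sup' Finset.univ_nonempty
        (fun i : Fin N => |x i - (x (i - 1) + x (i + 1)) / 2|) := by
  set d := univ.sup' univ_nonempty (fun i : Fin N => |x i - (x (i - 1) + x (i + 1)) / 2|)
  set Δ : Fin N → ℝ := fun i => x i - x (i - 1)
  have hsum : ∑ i, Δ i = 0 := by
    simp only [Δ, sum_sub_distrib, sub_eq_zero]
    exact (Equiv.sum_comp (Equiv.subRight 1) x).symm
  have hstep : ∀ i, |Δ (i + 1) - Δ i| ≤ 2 * d := by
    intro i
    have hi := le_sup' (fun i : Fin N => |x i - (x (i - 1) + x (i + 1)) / 2|) (mem_univ i)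
    have : Δ (i + 1) - Δ i = -(2 * (x i - (x (i - 1) + x (i + 1)) / 2)) := by
      simp only [Δ, add_sub_cancel_right]
      ring
    rw [this, abs_neg, abs_mul, abs_two]
    linarith
  refine sup'_le _ _ fun i _ => ?_
  have := Fin.two_mul_abs_le_of_sum_eq_zero hsum hstep i
  linarith

theorem stmt_6 (N : ℕ) [NeZero N] (hN : 3 ≤ N) (x : Fin N → ℝ) :
    Finset.univ.sup' Finset.univ_nonempty (fun i : Fin N => |x i - x (i - 1)|) ≤
      N * Finset.univ.sup' Finset.univ_nonempty
        (fun i : Fin N => |x i - (x (i - 1) + x (i + 1)) / 2|) :=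
  stmt_6_general N x
end

section
/- Let x ∈ ℝ^N with cyclic indexing and h(x) = 2∑_i (x_i - x_{i+1})^2 + ∑_i (x_i - x_{i+2})^2, d(x) = max_i |x_i - (x_{i-1}+x_{i+1})/2|. Then h(x) ≤ 6N^3·d(x)^2. -/
/-!
Write `Δᵢ = x_{i+1} - x_i`. The second differences `Δ_{i+1} - Δ_i` are `-2` times the
defects measured by `d`, so they are at most `2d` in absolute value, while `∑ Δᵢ = 0`.
Hence `N Δᵢ = ∑ₖ (Δᵢ - Δ_{i+k})` with `|Δᵢ - Δ_{i+k}| ≤ 2 k d`, which gives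
`|Δᵢ| ≤ (N - 1) d` and `|x_i - x_{i+2}| = |Δᵢ + Δ_{i+1}| ≤ 2 N d`; summing the squares gives
`2 N (N d)² + N (2 N d)² = 6 N³ d²`.
-/

open Finset

theorem sum_apply_add_sub_eq_zero {G : Type*} [AddGroup G] [Fintype G] (x : G → ℝ) (a : G) :
    ∑ i, (x (i + a) - x i) = 0 := by
  rw [sum_sub_distrib, Fintype.sum_equiv (Equiv.addRight a) (fun i => x (i + a)) x fun _ => rfl,
    sub_self]

theorem abs_apply_add_natCast_sub_le {G : Type*} [AddMonoidWithOne G] {f : G → ℝ} {c : ℝ}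
    (hstep : ∀ i, |f (i + 1) - f i| ≤ c) (i : G) (k : ℕ) : |f (i + k) - f i| ≤ k * c := by
  induction k with
  | zero => simp
  | succ k ih =>
    calc |f (i + (k + 1 : ℕ)) - f i| ≤ |f (i + k + 1) - f (i + k)| + |f (i + k) - f i| := by
          rw [Nat.cast_succ, ← add_assoc]; exact abs_sub_le _ _ _
      _ ≤ c + k * c := add_le_add (hstep _) ih
      _ = (k + 1 : ℕ) * c := by push_cast; ring

theorem sum_fin_val_mul_two (N : ℕ) :
    (∑ k : Fin N, ((k : ℕ) : ℝ)) * 2 = N * ((N - 1 : ℕ) : ℝ) := by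
  rw [Fin.sum_univ_eq_sum_range (fun k => (k : ℝ)), ← Nat.cast_sum]
  exact_mod_cast sum_range_id_mul_two N

open Fin.CommRing in
theorem abs_le_of_sum_eq_zero_of_abs_succ_sub_le {N : ℕ} [NeZero N] {f : Fin N → ℝ} {c : ℝ}
    (hsum : ∑ i, f i = 0) (hstep : ∀ i, |f (i + 1) - f i| ≤ c) (i : Fin N) :
    |f i| ≤ (N - 1 : ℕ) * c / 2 := by
  have hN : (0 : ℝ) < N := Nat.cast_pos.mpr (NeZero.pos N)
  have hmul : (N : ℝ) * f i = ∑ k : Fin N, (f i - f (i + k)) := by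
    rw [sum_sub_distrib, Fintype.sum_equiv (Equiv.addLeft i) (fun k => f (i + k)) f fun _ => rfl,
      hsum, sub_zero, sum_const, card_univ, Fintype.card_fin, nsmul_eq_mul]
  have hterm (k : Fin N) : |f i - f (i + k)| ≤ (k : ℕ) * c := by
    rw [abs_sub_comm]
    simpa only [Fin.cast_val_eq_self] using abs_apply_add_natCast_sub_le hstep i k
  have : N * |f i| ≤ N * ((N - 1 : ℕ) * c / 2) :=
    calc N * |f i| = |∑ k : Fin N, (f i - f (i + k))| := by rw [← hmul, abs_mul, abs_of_pos hN]
      _ ≤ ∑ k : Fin N, ((k : ℕ) : ℝ) * c :=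
          (abs_sum_le_sum_abs _ _).trans (sum_le_sum fun k _ => hterm k)
      _ = N * ((N - 1 : ℕ) * c / 2) := by
          rw [← sum_mul]; linear_combination c / 2 * sum_fin_val_mul_two N
  exact le_of_mul_le_mul_left this hN

theorem sum_sq_le_card_mul_sq_of_abs_le {ι : Type*} [Fintype ι] {f : ι → ℝ} {b : ℝ}
    (h : ∀ i, |f i| ≤ b) : ∑ i, f i ^ 2 ≤ Fintype.card ι * b ^ 2 := by
  calc ∑ i, f i ^ 2 ≤ ∑ _i : ι, b ^ 2 :=
        sum_le_sum fun i _ => sq_le_sq' (abs_le.mp (h i)).1 (abs_le.mp (h i)).2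
    _ = Fintype.card ι * b ^ 2 := by simp

theorem stmt_9_general (N : ℕ) [NeZero N] (x : Fin N → ℝ) :
    2 * (∑ i : Fin N, (x i - x (i + 1)) ^ 2) + ∑ i : Fin N, (x i - x (i + 2)) ^ 2 ≤
      6 * N ^ 3 * (Finset.univ.sup' Finset.univ_nonempty
        (fun i : Fin N => |x i - (x (i - 1) + x (i + 1)) / 2|)) ^ 2 := by
  set d := Finset.univ.sup' Finset.univ_nonempty
    (fun i : Fin N => |x i - (x (i - 1) + x (i + 1)) / 2|)
  have hd (i : Fin N) : |x i - (x (i - 1) + x (i + 1)) / 2| ≤ d :=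
    le_sup' (fun j : Fin N => |x j - (x (j - 1) + x (j + 1)) / 2|) (mem_univ i)
  have hd0 : 0 ≤ d := (abs_nonneg _).trans (hd 0)
  have hstep (i : Fin N) : |(x (i + 1 + 1) - x (i + 1)) - (x (i + 1) - x i)| ≤ 2 * d := by
    have h := hd (i + 1)
    rw [add_sub_cancel_right] at h
    rw [show (x (i + 1 + 1) - x (i + 1)) - (x (i + 1) - x i)
        = -(2 * (x (i + 1) - (x i + x (i + 1 + 1)) / 2)) by ring, abs_neg, abs_mul, abs_two]
    linarith
  have hΔ (i : Fin N) : |x i - x (i + 1)| ≤ N * d :=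
    calc |x i - x (i + 1)| ≤ ((N - 1 : ℕ) : ℝ) * (2 * d) / 2 := by
          rw [abs_sub_comm]
          exact abs_le_of_sum_eq_zero_of_abs_succ_sub_le (sum_apply_add_sub_eq_zero x 1) hstep i
      _ = ((N - 1 : ℕ) : ℝ) * d := by ring
      _ ≤ N * d := mul_le_mul_of_nonneg_right (by exact_mod_cast N.sub_le 1) hd0
  have hΔ2 (i : Fin N) : |x i - x (i + 2)| ≤ 2 * N * d :=
    calc |x i - x (i + 2)| = |(x i - x (i + 1)) + (x (i + 1) - x (i + 1 + 1))| := by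
          rw [show i + 2 = i + 1 + 1 by open Fin.CommRing in ring]; ring_nf
      _ ≤ N * d + N * d := (abs_add_le _ _).trans (add_le_add (hΔ i) (hΔ (i + 1)))
      _ = 2 * N * d := by ring
  have h1 := sum_sq_le_card_mul_sq_of_abs_le hΔ
  have h2 := sum_sq_le_card_mul_sq_of_abs_le hΔ2
  rw [Fintype.card_fin] at h1 h2
  calc _ ≤ 2 * (N * (N * d) ^ 2) + N * (2 * N * d) ^ 2 := by linarith
    _ = 6 * N ^ 3 * d ^ 2 := by ring

theorem stmt_9 (N : ℕ) [NeZero N] (hN : 3 ≤ N) (x : Fin N → ℝ) :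
    2 * (∑ i : Fin N, (x i - x (i + 1)) ^ 2) + ∑ i : Fin N, (x i - x (i + 2)) ^ 2 ≤
      6 * N ^ 3 * (Finset.univ.sup' Finset.univ_nonempty
        (fun i : Fin N => |x i - (x (i - 1) + x (i + 1)) / 2|)) ^ 2 :=
  stmt_9_general N x
end

section
/- Let x ∈ ℝ^N (N ≥ 5, cyclic indexing) with d_3(x) = d(x), μ = (x_2+x_4)/2, δ = x_3 - μ > 0. Let x' be obtained by replacing x_3 with u where u < μ - 3δ. Then d_3(x') > d_3(x) and d_3(x') = max_i d_i(x'). -/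
/-!
Replacing `x_3` by `u` leaves every `d_i` with `i ∉ {2, 3, 4}` unchanged and moves `d_2`, `d_4` by at
most `|u - x_3| / 2 ≤ (d_3(x') + d_3(x)) / 2`. As `d_2(x), d_4(x) ≤ d_3(x)`, both end below
`(3 d_3(x) + d_3(x')) / 2`, which is at most `d_3(x')` once `d_3(x') ≥ 3 d_3(x)`.
-/

open Function Finset

variable {ι : Type*} [AddCommGroupWithOne ι]

/-- The paper's `d_i(x)`. -/
noncomputable def nonconformity (x : ι → ℝ) (i : ι) : ℝ :=
  |x i - (x (i - 1) + x (i + 1)) / 2|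

lemma nonconformity_le_add (x y : ι → ℝ) (i : ι) :
    nonconformity y i ≤ nonconformity x i + |y i - x i| +
      (|y (i - 1) - x (i - 1)| + |y (i + 1) - x (i + 1)|) / 2 := by
  unfold nonconformity
  rcases abs_cases (y i - (y (i - 1) + y (i + 1)) / 2) with ⟨h, -⟩ | ⟨h, -⟩ <;> rw [h] <;>
    linarith [le_abs_self (x i - (x (i - 1) + x (i + 1)) / 2),
      neg_abs_le (x i - (x (i - 1) + x (i + 1)) / 2), le_abs_self (y i - x i), neg_abs_le (y i - x i),
      le_abs_self (y (i - 1) - x (i - 1)), neg_abs_le (y (i - 1) - x (i - 1)),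
      le_abs_self (y (i + 1) - x (i + 1)), neg_abs_le (y (i + 1) - x (i + 1))]

variable [DecidableEq ι]

lemma nonconformity_update_self (h1 : (1 : ι) ≠ 0) (x : ι → ℝ) (j : ι) (u : ℝ) :
    nonconformity (update x j u) j = |u - (x (j - 1) + x (j + 1)) / 2| := by
  have hm : j - 1 ≠ j := by simpa [sub_eq_self] using h1
  have hp : j + 1 ≠ j := by simpa [add_eq_left] using h1
  simp [nonconformity, update_of_ne hm, update_of_ne hp]

lemma nonconformity_update_le (h2 : (2 : ι) ≠ 0) (x : ι → ℝ) {i j : ι} (hij : i ≠ j) (u : ℝ) :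
    nonconformity (update x j u) i ≤ nonconformity x i + |u - x j| / 2 := by
  have hneighbours : |update x j u (i - 1) - x (i - 1)| + |update x j u (i + 1) - x (i + 1)|
      ≤ |u - x j| := by
    by_cases hm : i - 1 = j
    · have hp : i + 1 ≠ j := by
        intro hp
        have h2_eq : (i + 1) - (i - 1) = 2 := by rw [← one_add_one_eq_two]; abel
        exact h2 (by rw [← h2_eq, hp, hm, sub_self])
      simp [hm, hp]
    · by_cases hp : i + 1 = j <;> simp [hm, hp]
  have := nonconformity_le_add x (update x j u) i
  rw [update_of_ne hij, sub_self, abs_zero] at this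
  linarith

theorem nonconformity_update_le_update_self (h1 : (1 : ι) ≠ 0) (h2 : (2 : ι) ≠ 0)
    {x : ι → ℝ} {j : ι} (hmax : ∀ i, nonconformity x i ≤ nonconformity x j) {u : ℝ}
    (hu : 3 * nonconformity x j ≤ |u - (x (j - 1) + x (j + 1)) / 2|) (i : ι) :
    nonconformity (update x j u) i ≤ nonconformity (update x j u) j := by
  rcases eq_or_ne i j with rfl | hij
  · exact le_rfl
  have hmove : |u - x j| ≤ |u - (x (j - 1) + x (j + 1)) / 2| + nonconformity x j := by
    rw [nonconformity, abs_sub_comm (x j)]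
    exact abs_sub_le _ _ _
  rw [nonconformity_update_self h1]
  linarith [nonconformity_update_le h2 x hij u, hmax i]

theorem stmt_13 (N : ℕ) [NeZero N] (hN : 5 ≤ N) (x : Fin N → ℝ) (μ δ : ℝ)
    (hμ : μ = (x (3 - 1) + x (3 + 1)) / 2) (hδ : δ = x 3 - μ) (hδpos : 0 < δ)
    (hmax : |x 3 - (x (3 - 1) + x (3 + 1)) / 2| =
      Finset.univ.sup' Finset.univ_nonempty
        (fun i : Fin N => |x i - (x (i - 1) + x (i + 1)) / 2|))
    (u : ℝ) (hu : u < μ - 3 * δ)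
    (x' : Fin N → ℝ) (hx' : x' = Function.update x 3 u) :
    |x' 3 - (x' (3 - 1) + x' (3 + 1)) / 2| > |x 3 - (x (3 - 1) + x (3 + 1)) / 2| ∧
      |x' 3 - (x' (3 - 1) + x' (3 + 1)) / 2| =
        Finset.univ.sup' Finset.univ_nonempty
          (fun i : Fin N => |x' i - (x' (i - 1) + x' (i + 1)) / 2|) := by
  subst hx'
  let _ : CommRing (Fin N) := Fin.instCommRing N
  have h1 : (1 : Fin N) ≠ 0 := by
    intro h
    simpa [Nat.mod_eq_of_lt (show 1 < N by omega)] using congrArg Fin.val h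
  have h2 : (2 : Fin N) ≠ 0 := by
    intro h
    simpa [Nat.mod_eq_of_lt (show 2 < N by omega)] using congrArg Fin.val h
  have hd : nonconformity x 3 = δ := by rw [nonconformity, ← hμ, ← hδ, abs_of_pos hδpos]
  have hd' : nonconformity (update x 3 u) 3 = μ - u := by
    rw [nonconformity_update_self h1, ← hμ, abs_of_neg (by linarith), neg_sub]
  have hmax' (i : Fin N) : nonconformity x i ≤ nonconformity x 3 :=
    (le_sup' (nonconformity x) (mem_univ i)).trans_eq hmax.symm
  refine ⟨show nonconformity _ 3 > nonconformity x 3 by linarith, ?_⟩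
  refine le_antisymm (le_sup' (nonconformity (update x 3 u)) (mem_univ 3))
    (sup'_le _ _ fun i _ => nonconformity_update_le_update_self h1 h2 hmax' ?_ i)
  rw [← hμ, abs_of_neg (by linarith), hd]
  linarith
end

section
/- Let x ∈ ℝ^N (N ≥ 5, cyclic) with δ := d_3(x) = d(x), and let x' be obtained by replacing x_3 with x_3 + v where |v| ≤ 4δ. Then |h(x') - h(x)| ≤ 240δ², and consequently h(x') ≤ 121·h(x) (using 2δ² ≤ h(x)). -/
/-!
Only the terms of `h` involving `x₃` change, and they give
`h(x') - h(x) = v (16 d₃ + 4 d₂ + 4 d₄) + 6 v²` with the signed defects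
`dᵢ = xᵢ - (xᵢ₋₁ + xᵢ₊₁) / 2`; as `|dᵢ| ≤ δ` and `|v| ≤ 4δ` this is at most `192 δ²`.
Conversely `2 ((x₂ - x₃)² + (x₃ - x₄)²) ≥ (x₂ - 2x₃ + x₄)² = 4δ²`, so `h(x) ≥ 4δ²`.
-/

open Finset Function

lemma Fin.ofNat_ne_zero_of_lt {N k : ℕ} [NeZero N] (hk : k ≠ 0) (hkN : k < N) :
    Fin.ofNat N k ≠ 0 := by
  rw [Ne, Fin.ext_iff, Fin.val_ofNat, Fin.val_zero, Nat.mod_eq_of_lt hkN]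
  exact hk

section

variable {G : Type*} [AddCommGroup G] [Fintype G]

def shiftSqSum (f : G → ℝ) (k : G) : ℝ := ∑ i, (f i - f (i + k)) ^ 2

noncomputable def defect (x : G → ℝ) (e i : G) : ℝ := x i - (x (i - e) + x (i + e)) / 2

def energy (x : G → ℝ) (e : G) : ℝ := 2 * shiftSqSum x e + shiftSqSum x (e + e)

lemma shiftSqSum_nonneg (f : G → ℝ) (k : G) : 0 ≤ shiftSqSum f k :=
  sum_nonneg fun _ _ => sq_nonneg _

lemma add_sq_le_shiftSqSum (f : G → ℝ) {k : G} (hk : k ≠ 0) (j : G) :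
    (f (j - k) - f j) ^ 2 + (f j - f (j + k)) ^ 2 ≤ shiftSqSum f k := by
  have h := add_le_sum (s := univ) (f := fun i => (f i - f (i + k)) ^ 2)
    (fun _ _ => sq_nonneg _) (mem_univ (j - k)) (mem_univ j) (by simpa using hk)
  simpa only [sub_add_cancel, shiftSqSum] using h

lemma shiftSqSum_update [DecidableEq G] (f : G → ℝ) {k : G} (hk : k ≠ 0) (j : G) (a : ℝ) :
    shiftSqSum (update f j a) k = shiftSqSum f k
      + ((f (j - k) - a) ^ 2 - (f (j - k) - f j) ^ 2)
      + ((a - f (j + k)) ^ 2 - (f j - f (j + k)) ^ 2) := by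
  have hjk : j - k ≠ j := by simpa using hk
  have hkj : j + k ≠ j := by simpa using hk
  rw [add_assoc, ← sub_eq_iff_eq_add', shiftSqSum, shiftSqSum, ← sum_sub_distrib,
    Fintype.sum_eq_add (j - k) j hjk]
  · simp [update_of_ne hjk, update_of_ne hkj]
  · rintro i ⟨hi, hij⟩
    have hik : i + k ≠ j := fun h => hi (eq_sub_of_add_eq h)
    simp [update_of_ne hij, update_of_ne hik]

lemma four_mul_sq_defect_le_energy (x : G → ℝ) {e : G} (he : e ≠ 0) (j : G) :
    4 * defect x e j ^ 2 ≤ energy x e := by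
  have hpair : 4 * defect x e j ^ 2 ≤ 2 * ((x (j - e) - x j) ^ 2 + (x j - x (j + e)) ^ 2) := by
    rw [defect]
    nlinarith [sq_nonneg (x (j - e) - x (j + e))]
  rw [energy]
  linarith [add_sq_le_shiftSqSum x he j, shiftSqSum_nonneg x (e + e)]

variable [DecidableEq G] {e : G}

lemma energy_update_sub (x : G → ℝ) (he : e ≠ 0) (he2 : e + e ≠ 0) (j : G) (v : ℝ) :
    energy (update x j (x j + v)) e - energy x e =
      v * (16 * defect x e j + 4 * defect x e (j - e) + 4 * defect x e (j + e)) + 6 * v ^ 2 := by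
  simp only [energy, shiftSqSum_update x he, shiftSqSum_update x he2, defect, sub_sub,
    add_assoc, sub_add_cancel, add_sub_cancel_right]
  ring

lemma abs_energy_update_sub_le {x : G → ℝ} (he : e ≠ 0) (he2 : e + e ≠ 0) {δ : ℝ}
    (hx : ∀ i, |defect x e i| ≤ δ) (j : G) (v : ℝ) :
    |energy (update x j (x j + v)) e - energy x e| ≤ 24 * |v| * δ + 6 * v ^ 2 := by
  rw [energy_update_sub x he he2]
  have hsum : |16 * defect x e j + 4 * defect x e (j - e) + 4 * defect x e (j + e)| ≤ 24 * δ := by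
    have := abs_add_three (16 * defect x e j) (4 * defect x e (j - e)) (4 * defect x e (j + e))
    simp only [abs_mul, abs_of_pos (by norm_num : (0 : ℝ) < 16),
      abs_of_pos (by norm_num : (0 : ℝ) < 4)] at this
    linarith [hx j, hx (j - e), hx (j + e)]
  calc _ ≤ |v * (16 * defect x e j + 4 * defect x e (j - e) + 4 * defect x e (j + e))|
          + |6 * v ^ 2| := abs_add_le _ _
    _ ≤ |v| * (24 * δ) + 6 * v ^ 2 := by
        rw [abs_mul, abs_of_nonneg (by positivity : 0 ≤ 6 * v ^ 2)]
        gcongr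
    _ = _ := by ring

end


theorem stmt_16 (N : ℕ) [NeZero N] (hN : 5 ≤ N) (x : Fin N → ℝ) (δ : ℝ)
    (hδ : δ = |x 3 - (x (3 - 1) + x (3 + 1)) / 2|)
    (hmax : δ = Finset.univ.sup' Finset.univ_nonempty
        (fun i : Fin N => |x i - (x (i - 1) + x (i + 1)) / 2|))
    (v : ℝ) (hv : |v| ≤ 4 * δ)
    (x' : Fin N → ℝ) (hx' : x' = Function.update x 3 (x 3 + v)) :
    |(2 * (∑ i : Fin N, (x' i - x' (i + 1)) ^ 2) + ∑ i : Fin N, (x' i - x' (i + 2)) ^ 2) -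
        (2 * (∑ i : Fin N, (x i - x (i + 1)) ^ 2) + ∑ i : Fin N, (x i - x (i + 2)) ^ 2)| ≤
      240 * δ ^ 2 ∧
    2 * (∑ i : Fin N, (x' i - x' (i + 1)) ^ 2) + ∑ i : Fin N, (x' i - x' (i + 2)) ^ 2 ≤
      121 * (2 * (∑ i : Fin N, (x i - x (i + 1)) ^ 2) + ∑ i : Fin N, (x i - x (i + 2)) ^ 2) := by
  have h1 : (1 : Fin N) ≠ 0 := Fin.ofNat_ne_zero_of_lt (k := 1) one_ne_zero (by omega)
  have h11 : (1 : Fin N) + 1 = 2 := by ext; simp [Fin.val_add]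
  have h2 : (1 : Fin N) + 1 ≠ 0 := h11 ▸ Fin.ofNat_ne_zero_of_lt (k := 2) two_ne_zero (by omega)
  have henergy_def : ∀ y : Fin N → ℝ, energy y 1 =
      2 * (∑ i : Fin N, (y i - y (i + 1)) ^ 2) + ∑ i : Fin N, (y i - y (i + 2)) ^ 2 := fun y => by
    rw [energy, shiftSqSum, shiftSqSum, h11]
  rw [← henergy_def, ← henergy_def]
  have hdefect : ∀ i, |defect x 1 i| ≤ δ := fun i =>
    hmax ▸ le_sup' (fun i => |defect x 1 i|) (mem_univ i)
  have hδ0 : 0 ≤ δ := hδ ▸ abs_nonneg _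
  have hv0 : 0 ≤ |v| := abs_nonneg v
  have hdiff : |energy x' 1 - energy x 1| ≤ 240 * δ ^ 2 := calc
    _ ≤ 24 * |v| * δ + 6 * |v| ^ 2 := by
      rw [hx', sq_abs]
      exact abs_energy_update_sub_le h1 h2 hdefect 3 v
    _ ≤ 240 * δ ^ 2 := by nlinarith
  have henergy : 4 * δ ^ 2 ≤ energy x 1 := by
    rw [hδ, sq_abs]
    exact four_mul_sq_defect_le_energy x h1 3
  exact ⟨hdiff, by linarith [le_of_abs_le hdiff, sq_nonneg δ]⟩
end

section
/- Let x_1,...,x_5 be reals with x_3 > (x_2+x_4)/2 and x_3 > max(Q_1,Q_2,Q_3,Q_4), where Q_0 = x_2+x_4-x_3, Q_1 = x_1-x_2+x_4, Q_2 = (-x_1+3x_2+x_4)/3, Q_3 = x_2-x_4+x_5, Q_4 = (x_2+3x_4-x_5)/3. Set a = max(0, min(Q_0,Q_1,Q_2,Q_3,Q_4)). Then x_1 + 2x_2 - 4x_3 + 2x_4 + x_5 ≤ 2a. -/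
/-!
Put S = x₁ + 2x₂ - 4x₃ + 2x₄ + x₅ and dⱼ = x₃ - Qⱼ > 0 for j = 1, …, 4. Every Qᵢ exceeds S/2 by a
nonnegative combination of the gaps dⱼ:
  2Q₀ - S = d₁ + d₃,  2Q₁ - S = 3d₂ + d₃,  2Q₂ - S = 2d₁ + d₂ + d₃,
and, by the mirror symmetry xᵢ ↔ x₆₋ᵢ, 2Q₃ - S = d₁ + 3d₄ and 2Q₄ - S = d₁ + 2d₃ + d₄.
Hence S ≤ 2 min(Q₀, …, Q₄) ≤ 2a.
-/

theorem stencil_le_two_mul_min_of_lt {x1 x2 x3 x4 x5 : ℝ}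
    (h1 : x1 - x2 + x4 < x3) (h2 : (-x1 + 3 * x2 + x4) / 3 < x3)
    (h3 : x2 - x4 + x5 < x3) (h4 : (x2 + 3 * x4 - x5) / 3 < x3) :
    x1 + 2 * x2 - 4 * x3 + 2 * x4 + x5 ≤
      2 * min (x2 + x4 - x3) (min (x1 - x2 + x4) (min ((-x1 + 3 * x2 + x4) / 3)
        (min (x2 - x4 + x5) ((x2 + 3 * x4 - x5) / 3)))) := by
  rw [← div_le_iff₀' two_pos]
  exact le_min (by linarith) (le_min (by linarith) (le_min (by linarith)
    (le_min (by linarith) (by linarith))))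

theorem stmt_18_general (x1 x2 x3 x4 x5 Q0 Q1 Q2 Q3 Q4 a : ℝ)
    (hQ0 : Q0 = x2 + x4 - x3) (hQ1 : Q1 = x1 - x2 + x4)
    (hQ2 : Q2 = (-x1 + 3 * x2 + x4) / 3) (hQ3 : Q3 = x2 - x4 + x5)
    (hQ4 : Q4 = (x2 + 3 * x4 - x5) / 3)
    (hdom : x3 > max (max Q1 Q2) (max Q3 Q4))
    (ha : a = max 0 (min Q0 (min Q1 (min Q2 (min Q3 Q4))))) :
    x1 + 2 * x2 - 4 * x3 + 2 * x4 + x5 ≤ 2 * a := by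
  subst hQ0 hQ1 hQ2 hQ3 hQ4 ha
  simp only [gt_iff_lt, max_lt_iff] at hdom
  obtain ⟨⟨h1, h2⟩, h3, h4⟩ := hdom
  exact (stencil_le_two_mul_min_of_lt h1 h2 h3 h4).trans
    (mul_le_mul_of_nonneg_left (le_max_right _ _) zero_le_two)

theorem stmt_18 (x1 x2 x3 x4 x5 Q0 Q1 Q2 Q3 Q4 a : ℝ)
    (hQ0 : Q0 = x2 + x4 - x3) (hQ1 : Q1 = x1 - x2 + x4)
    (hQ2 : Q2 = (-x1 + 3 * x2 + x4) / 3) (hQ3 : Q3 = x2 - x4 + x5)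
    (hQ4 : Q4 = (x2 + 3 * x4 - x5) / 3)
    (hpos : x3 > (x2 + x4) / 2)
    (hdom : x3 > max (max Q1 Q2) (max Q3 Q4))
    (ha : a = max 0 (min Q0 (min Q1 (min Q2 (min Q3 Q4))))) :
    x1 + 2 * x2 - 4 * x3 + 2 * x4 + x5 ≤ 2 * a :=
  stmt_18_general x1 x2 x3 x4 x5 Q0 Q1 Q2 Q3 Q4 a hQ0 hQ1 hQ2 hQ3 hQ4 hdom ha
end
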